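/- arXiv:1605.08629 — 2 statements merged into one kernel-verified Lean document; each statement's English description precedes it below -/
import Mathlib

section
/- A 2n×2n matrix M is a weight-0 balanced semimagic square if and only if M = X_{2n} diag(Y, Z) X_{2n}, where Y is an n×n weight-0 semimagic square matrix (all row and column sums of Y vanish) and Z is an arbitrary n×n matrix. -/
open Matrix BigOperators

def Jmat (n : ℕ) : Matrix (Fin n) (Fin n) ℝ :=
  Matrix.of fun i j => if j = i.rev then 1 else 0

/-- The exchange matrix of size `2n`, in block form `[[0, J],[J, 0]]`. -/
def J2mat (n : ℕ) : Matrix (Fin n ⊕ Fin n) (Fin n ⊕ Fin n) ℝ :=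
  Matrix.fromBlocks 0 (Jmat n) (Jmat n) 0

/-- The block matrix `X_{2n} = (1/√2) [[I, J],[J, -I]]`. -/
noncomputable def Xmat (n : ℕ) : Matrix (Fin n ⊕ Fin n) (Fin n ⊕ Fin n) ℝ :=
  (Real.sqrt 2)⁻¹ • Matrix.fromBlocks 1 (Jmat n) (Jmat n) (-1)

/-- Weight-0 semimagic: all row and column sums vanish. -/
def IsSemimagic0 {m : Type*} [Fintype m] (M : Matrix m m ℝ) : Prop :=
  (∀ i, ∑ j, M i j = 0) ∧ (∀ j, ∑ i, M i j = 0)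

section helpers
variable {n : ℕ}

lemma mulJ_apply (A : Matrix (Fin n) (Fin n) ℝ) (i j : Fin n) :
    (A * Jmat n) i j = A i j.rev := by
  simp only [Matrix.mul_apply, Jmat, Matrix.of_apply]
  rw [Finset.sum_eq_single j.rev]
  · simp [Fin.rev_rev]
  · intro k _ hk
    rw [if_neg, mul_zero]
    intro h; exact hk (by rw [h, Fin.rev_rev])
  · simp

lemma Jmul_apply (A : Matrix (Fin n) (Fin n) ℝ) (i j : Fin n) :
    (Jmat n * A) i j = A i.rev j := by
  simp only [Matrix.mul_apply, Jmat, Matrix.of_apply]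
  rw [Finset.sum_eq_single i.rev]
  · simp
  · intro k _ hk; rw [if_neg (fun h => hk h), zero_mul]
  · simp

lemma JJ : Jmat n * Jmat n = 1 := by
  ext i j
  rw [mulJ_apply]
  simp [Jmat, Matrix.one_apply, Fin.rev_inj, eq_comm, Fin.rev_rev]

lemma sum_rev (f : Fin n → ℝ) : ∑ j : Fin n, f j.rev = ∑ j, f j :=
  Fintype.sum_equiv Fin.revPerm (fun j => f j.rev) f (fun j => by simp)

end helpers

section key
variable {n : ℕ}

lemma Xprod (Y Z : Matrix (Fin n) (Fin n) ℝ) :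
    Xmat n * Matrix.fromBlocks Y 0 0 Z * Xmat n =
      (2:ℝ)⁻¹ • Matrix.fromBlocks (Y + Jmat n * Z * Jmat n) (Y * Jmat n - Jmat n * Z)
        (Jmat n * Y - Z * Jmat n) (Jmat n * Y * Jmat n + Z) := by
  have h2 : (Real.sqrt 2)⁻¹ * (Real.sqrt 2)⁻¹ = (2:ℝ)⁻¹ := by
    rw [← mul_inv, Real.mul_self_sqrt (by norm_num)]
  simp only [Xmat, Matrix.smul_mul, Matrix.mul_smul, smul_smul, h2,
    Matrix.fromBlocks_multiply]
  congr 1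
  rw [Matrix.fromBlocks_inj]
  refine ⟨?_, ?_, ?_, ?_⟩ <;>
    simp [mul_sub, sub_mul, Matrix.mul_assoc, sub_eq_add_neg]

lemma J_J_mul (A : Matrix (Fin n) (Fin n) ℝ) : Jmat n * (Jmat n * A) = A := by
  rw [← mul_assoc, JJ, one_mul]

lemma mul_J_J (A : Matrix (Fin n) (Fin n) ℝ) : A * Jmat n * Jmat n = A := by
  rw [mul_assoc, JJ, mul_one]

lemma balconj (P Q R S : Matrix (Fin n) (Fin n) ℝ) :
    J2mat n * Matrix.fromBlocks P Q R S * J2mat n =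
      Matrix.fromBlocks (Jmat n * S * Jmat n) (Jmat n * R * Jmat n)
        (Jmat n * Q * Jmat n) (Jmat n * P * Jmat n) := by
  simp [J2mat, Matrix.fromBlocks_multiply, Matrix.mul_assoc]

end key

theorem balanced0_block_representation (n : ℕ)
    (M : Matrix (Fin n ⊕ Fin n) (Fin n ⊕ Fin n) ℝ) :
    (IsSemimagic0 M ∧ M = J2mat n * M * J2mat n) ↔
      ∃ Y Z : Matrix (Fin n) (Fin n) ℝ,
        IsSemimagic0 Y ∧
        M = Xmat n * Matrix.fromBlocks Y 0 0 Z * Xmat n := by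
  constructor
  · rintro ⟨⟨hr, hc⟩, hbal⟩
    set A := M.toBlocks₁₁ with hAdef
    set B := M.toBlocks₁₂ with hBdef
    set C := M.toBlocks₂₁ with hCdef
    set D := M.toBlocks₂₂ with hDdef
    have hM : M = Matrix.fromBlocks A B C D := (Matrix.fromBlocks_toBlocks M).symm
    rw [hM, balconj, Matrix.fromBlocks_inj] at hbal
    obtain ⟨hA, hB, hC, hD⟩ := hbal
    refine ⟨A + B * Jmat n, D - C * Jmat n, ⟨?_, ?_⟩, ?_⟩
    · intro i
      have h := hr (Sum.inl i)
      rw [Fintype.sum_sum_type] at h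
      have hAe : ∀ j, A i j = M (Sum.inl i) (Sum.inl j) := fun j => rfl
      have hBe : ∀ j, B i j = M (Sum.inl i) (Sum.inr j) := fun j => rfl
      calc ∑ j, (A + B * Jmat n) i j
          = ∑ j, A i j + ∑ j : Fin n, B i j.rev := by
            simp [Matrix.add_apply, mulJ_apply, Finset.sum_add_distrib]
        _ = ∑ j, A i j + ∑ j, B i j := by rw [sum_rev]
        _ = 0 := by simpa [hAe, hBe] using h
    · intro j
      have h := hc (Sum.inl j)
      rw [Fintype.sum_sum_type] at h
      have hAe : ∀ i, A i j = M (Sum.inl i) (Sum.inl j) := fun i => rfl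
      have hCe : ∀ i, C i j = M (Sum.inr i) (Sum.inl j) := fun i => rfl
      have hBC : ∑ i : Fin n, B i j.rev = ∑ i, C i j := by
        rw [hB]
        calc ∑ i : Fin n, (Jmat n * C * Jmat n) i j.rev
            = ∑ i : Fin n, C i.rev j := by
              simp [mulJ_apply, Jmul_apply, Fin.rev_rev]
          _ = ∑ i, C i j := sum_rev (fun i => C i j)
      calc ∑ i, (A + B * Jmat n) i j
          = ∑ i, A i j + ∑ i : Fin n, B i j.rev := by
            simp [Matrix.add_apply, mulJ_apply, Finset.sum_add_distrib]
        _ = ∑ i, A i j + ∑ i, C i j := by rw [hBC]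
        _ = 0 := by simpa [hAe, hCe] using h
    · rw [Xprod]
      have h1 : (A + B * Jmat n) + Jmat n * (D - C * Jmat n) * Jmat n = (2:ℝ) • A := by
        rw [hA, hB]
        simp only [mul_sub, sub_mul, mul_assoc, JJ, J_J_mul, mul_one, one_mul, two_smul]
        abel
      have h2 : (A + B * Jmat n) * Jmat n - Jmat n * (D - C * Jmat n) = (2:ℝ) • B := by
        rw [hA, hB]
        simp only [mul_sub, sub_mul, add_mul, mul_assoc, JJ, J_J_mul, mul_one, one_mul, two_smul]
        abel
      have h3 : Jmat n * (A + B * Jmat n) - (D - C * Jmat n) * Jmat n = (2:ℝ) • C := by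
        rw [hA, hB]
        simp only [mul_sub, sub_mul, mul_add, mul_assoc, JJ, J_J_mul, mul_one, one_mul, two_smul]
        abel
      have h4 : Jmat n * (A + B * Jmat n) * Jmat n + (D - C * Jmat n) = (2:ℝ) • D := by
        rw [hA, hB]
        simp only [mul_sub, sub_mul, mul_add, add_mul, mul_assoc, JJ, J_J_mul, mul_one, one_mul,
          two_smul]
        abel
      rw [h1, h2, h3, h4, ← Matrix.fromBlocks_smul, smul_smul]
      norm_num
      exact hM
  · rintro ⟨Y, Z, ⟨hYr, hYc⟩, rfl⟩
    rw [Xprod]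
    refine ⟨⟨?_, ?_⟩, ?_⟩
    · rintro (i | i) <;>
        simp [Fintype.sum_sum_type, Matrix.fromBlocks, Matrix.smul_apply, Matrix.add_apply,
          Matrix.sub_apply, mulJ_apply, Jmul_apply, Finset.sum_add_distrib,
          Finset.sum_sub_distrib, ← Finset.mul_sum, sum_rev, hYr]
    · rintro (j | j)
      · simp only [Fintype.sum_sum_type, Matrix.fromBlocks, Matrix.smul_apply, Matrix.add_apply,
          Matrix.sub_apply, Matrix.of_apply, Sum.elim_inl, Sum.elim_inr, mulJ_apply, Jmul_apply,
          smul_add, smul_sub, smul_eq_mul, Finset.sum_add_distrib, Finset.sum_sub_distrib,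
          ← Finset.mul_sum]
        rw [sum_rev (fun x => Z x j.rev), sum_rev (fun x => Y x j), hYc j]
        ring
      · simp only [Fintype.sum_sum_type, Matrix.fromBlocks, Matrix.smul_apply, Matrix.add_apply,
          Matrix.sub_apply, Matrix.of_apply, Sum.elim_inl, Sum.elim_inr, mulJ_apply, Jmul_apply,
          smul_add, smul_sub, smul_eq_mul, Finset.sum_add_distrib, Finset.sum_sub_distrib,
          ← Finset.mul_sum]
        rw [sum_rev (fun x => Z x j), sum_rev (fun x => Y x j.rev), hYc j.rev]
        ring
    · rw [Matrix.mul_smul, Matrix.smul_mul, balconj]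
      congr 1
      rw [Matrix.fromBlocks_inj]
      refine ⟨?_, ?_, ?_, ?_⟩ <;>
        simp only [mul_sub, sub_mul, mul_add, add_mul, mul_assoc, JJ, J_J_mul, mul_one,
          one_mul]
end

section
/- For a weight-0 balanced semimagic square M = X_{2n} diag(Y,Z) X_{2n} of size 2n, the trace of M equals tr Y + tr Z, and the trace of J_{2n}M (the antidiagonal sum of M) equals tr Y - tr Z. Consequently, M is a magic square (both diagonal sums vanish) if and only if tr Y = 0 and tr Z = 0. -/
open Matrix BigOperators

/-! Both diagonal sums are traces, and trace is invariant under cyclic permutation. Since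
`Xmat n` is an involution, `tr M = tr (Xmat² · diag(Y, Z)) = tr Y + tr Z`; and conjugating the
block exchange by `Xmat n` gives `Xmat n * J2mat n * Xmat n = diag(1, -1)`, so
`tr (J2mat n * M) = tr (diag(1, -1) · diag(Y, Z)) = tr Y - tr Z`. -/

theorem Matrix.trace_fromBlocks {l m R : Type*} [Fintype l] [Fintype m] [AddCommMonoid R]
    (A : Matrix l l R) (B : Matrix l m R) (C : Matrix m l R) (D : Matrix m m R) :
    (fromBlocks A B C D).trace = A.trace + D.trace := by
  simp [trace, Fintype.sum_sum_type]

theorem Matrix.trace_mul_mul_of_mul_self_eq_one {m R : Type*} [Fintype m] [DecidableEq m]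
    [CommSemiring R] {P : Matrix m m R} (hP : P * P = 1) (A : Matrix m m R) :
    (P * A * P).trace = A.trace := by
  rw [trace_mul_comm, ← Matrix.mul_assoc, hP, Matrix.one_mul]

theorem Jmat_mul_Jmat (n : ℕ) : Jmat n * Jmat n = 1 := by
  ext i j
  simp only [Jmat, mul_apply, of_apply, one_apply]
  rw [Finset.sum_eq_single i.rev]
  · simp [eq_comm]
  · intro k _ hk
    simp [hk]
  · simp

theorem inv_sqrt_two_mul_self : (Real.sqrt 2)⁻¹ * (Real.sqrt 2)⁻¹ = 2⁻¹ := by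
  rw [← mul_inv, Real.mul_self_sqrt zero_le_two]

theorem Xmat_mul_Xmat (n : ℕ) : Xmat n * Xmat n = 1 := by
  rw [Xmat, smul_mul_smul_comm, inv_sqrt_two_mul_self, ← fromBlocks_one]
  simp only [fromBlocks_multiply, Jmat_mul_Jmat, Matrix.mul_one, Matrix.one_mul, Matrix.mul_neg,
    Matrix.neg_mul, fromBlocks_smul]
  congr 1 <;> module

theorem Xmat_mul_J2mat_mul_Xmat (n : ℕ) :
    Xmat n * J2mat n * Xmat n = fromBlocks 1 0 0 (-1) := by
  rw [Xmat, J2mat, Matrix.smul_mul, Matrix.smul_mul, Matrix.mul_smul, smul_smul,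
    inv_sqrt_two_mul_self]
  simp only [fromBlocks_multiply, Jmat_mul_Jmat, Matrix.mul_one, Matrix.one_mul, Matrix.mul_neg,
    Matrix.neg_mul, Matrix.mul_zero, add_zero, zero_add, fromBlocks_smul]
  congr 1 <;> module

theorem balanced_magic_iff_traces_vanish_general (n : ℕ) (Y Z : Matrix (Fin n) (Fin n) ℝ)
    (M : Matrix (Fin n ⊕ Fin n) (Fin n ⊕ Fin n) ℝ)
    (hM : M = Xmat n * Matrix.fromBlocks Y 0 0 Z * Xmat n) :
    M.trace = Y.trace + Z.trace ∧
    (J2mat n * M).trace = Y.trace - Z.trace ∧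
    ((M.trace = 0 ∧ (J2mat n * M).trace = 0) ↔ (Y.trace = 0 ∧ Z.trace = 0)) := by
  have hdiag : M.trace = Y.trace + Z.trace := by
    rw [hM, trace_mul_mul_of_mul_self_eq_one (Xmat_mul_Xmat n), trace_fromBlocks]
  have hanti : (J2mat n * M).trace = Y.trace - Z.trace := by
    rw [hM, ← Matrix.mul_assoc, trace_mul_comm, ← Matrix.mul_assoc, ← Matrix.mul_assoc,
      Xmat_mul_J2mat_mul_Xmat, fromBlocks_multiply, trace_fromBlocks]
    simp [sub_eq_add_neg]
  refine ⟨hdiag, hanti, ?_⟩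
  rw [hdiag, hanti]
  constructor <;> rintro ⟨h₁, h₂⟩ <;> constructor <;> linarith

theorem balanced_magic_iff_traces_vanish (n : ℕ) (Y Z : Matrix (Fin n) (Fin n) ℝ)
    (hY : IsSemimagic0 Y)
    (M : Matrix (Fin n ⊕ Fin n) (Fin n ⊕ Fin n) ℝ)
    (hM : M = Xmat n * Matrix.fromBlocks Y 0 0 Z * Xmat n) :
    M.trace = Y.trace + Z.trace ∧
    (J2mat n * M).trace = Y.trace - Z.trace ∧
    ((M.trace = 0 ∧ (J2mat n * M).trace = 0) ↔ (Y.trace = 0 ∧ Z.trace = 0)) :=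
  balanced_magic_iff_traces_vanish_general n Y Z M hM
end
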